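/- There exists a real constant ε₀ > 0 such that for every real ε with 0 < ε < ε₀, every simple graph G on a finite vertex set, every nontrivial cluster C of the agreement decomposition of G with parameter ε, and all vertices u, v ∈ C, the neighborhoods intersect: N(u) ∩ N(v) ≠ ∅. -/

import Mathlib

open scoped symmDiff Classical

/-- Two vertices `u, v` are in `ε`-agreement in `G` if
`|N(u) △ N(v)| < ε·max(|N(u)|, |N(v)|)`. -/
def InAgreement {V : Type*} [Fintype V] [DecidableEq V]
    (G : SimpleGraph V) [DecidableRel G.Adj] (ε : ℝ) (u v : V) : Prop :=
  ((G.neighborFinset u ∆ G.neighborFinset v).card : ℝ) <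
    ε * (max (G.neighborFinset u).card (G.neighborFinset v).card : ℕ)

/-- A vertex is `ε`-heavy if it is in `ε`-agreement with more than a
`(1 − ε)`-fraction of its neighbors. -/
noncomputable def Heavy {V : Type*} [Fintype V] [DecidableEq V]
    (G : SimpleGraph V) [DecidableRel G.Adj] (ε : ℝ) (u : V) : Prop :=
  (1 - ε) * ((G.neighborFinset u).card : ℝ) <
    (((G.neighborFinset u).filter (fun v => InAgreement G ε u v)).card : ℝ)

/-- The graph `G̃` obtained from `G` by deleting every edge whose endpoints are
not in `ε`-agreement and then every remaining edge both of whose endpoints are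
`ε`-light. -/
noncomputable def tildeGraph {V : Type*} [Fintype V] [DecidableEq V]
    (G : SimpleGraph V) [DecidableRel G.Adj] (ε : ℝ) : SimpleGraph V where
  Adj u v := G.Adj u v ∧ InAgreement G ε u v ∧ (Heavy G ε u ∨ Heavy G ε v)
  symm := ⟨by
    intro u v ⟨h1, h2, h3⟩
    refine ⟨h1.symm, ?_, h3.symm⟩
    unfold InAgreement at h2 ⊢
    rwa [symmDiff_comm, max_comm]⟩
  loopless := ⟨fun u h => G.irrefl h.1⟩

/-- `C` is a cluster of the agreement decomposition of `G` with parameter `ε`: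
the vertex set of a connected component of `G̃`. -/
noncomputable def IsCluster {V : Type*} [Fintype V] [DecidableEq V]
    (G : SimpleGraph V) [DecidableRel G.Adj] (ε : ℝ) (C : Finset V) : Prop :=
  ∃ v : V, C = Finset.univ.filter (fun w => (tildeGraph G ε).Reachable v w)

/-!
Agreement compares neighbourhoods up to a relative error and satisfies a weak triangle
inequality. It self-improves on heavy vertices: if heavy `a` and `b` agree with any ratio
`δ ≤ 1 - 2ε`, their sets of `ε`-agreeing neighbours (each more than a `(1 - ε)`-fraction of
the neighbourhood) must meet, and a common such neighbour shows that `a` and `b` `3ε`-agree.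
Hence `3ε`-agreement is transitive on heavy vertices. Every edge of `G̃` has a heavy endpoint
agreeing with both ends, so any two vertices of a nontrivial cluster are `ε`-close to heavy
vertices that `3ε`-agree; the two vertices then agree with a ratio below `1`, which forces a
common neighbour.
-/

section AgreeWithin

variable {α : Type*} [DecidableEq α] {s t u s' t' : Finset α} {δ δ' δ₁ δ₂ ε : ℝ}

-- `InAgreement G δ u v` unfolds to `AgreeWithin δ (G.neighborFinset u) (G.neighborFinset v)`,
-- so the lemmas below apply to it directly.
def AgreeWithin (δ : ℝ) (s t : Finset α) : Prop :=
  ((s ∆ t).card : ℝ) < δ * (max s.card t.card : ℕ)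

theorem Finset.two_mul_card_union (s t : Finset α) :
    2 * (s ∪ t).card = s.card + t.card + (s ∆ t).card := by
  have hsub : s ∩ t ⊆ s ∪ t := Finset.inter_subset_union
  have hsd : (s ∆ t).card = (s ∪ t).card - (s ∩ t).card := by
    rw [symmDiff_eq_sup_sdiff_inf]
    exact Finset.card_sdiff_of_subset hsub
  have := Finset.card_union_add_card_inter s t
  have := Finset.card_le_card hsub
  omega

theorem Finset.card_le_card_add_card_symmDiff (s t : Finset α) :
    t.card ≤ s.card + (s ∆ t).card := by
  have := Finset.two_mul_card_union s t
  have := Finset.card_le_card (Finset.subset_union_right (s₁ := s) (s₂ := t))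
  omega

theorem Finset.card_symmDiff_le_add (s t u : Finset α) :
    (s ∆ u).card ≤ (s ∆ t).card + (t ∆ u).card :=
  (Finset.card_le_card (symmDiff_triangle s t u)).trans (Finset.card_union_le _ _)

theorem agreeWithin_self (hs : s.Nonempty) (hδ : 0 < δ) : AgreeWithin δ s s := by
  simp only [AgreeWithin, symmDiff_self, Finset.bot_eq_empty, Finset.card_empty,
    Nat.cast_zero, max_self]
  have := hs.card_pos
  positivity

namespace AgreeWithin

theorem symm (h : AgreeWithin δ s t) : AgreeWithin δ t s := by
  rwa [AgreeWithin, symmDiff_comm, max_comm]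

theorem mono (h : AgreeWithin δ s t) (hδ : δ ≤ δ') : AgreeWithin δ' s t :=
  h.trans_le (by gcongr)

theorem pos (h : AgreeWithin δ s t) : 0 < δ :=
  pos_of_mul_pos_left ((Nat.cast_nonneg _).trans_lt h) (Nat.cast_nonneg _)

theorem one_sub_mul_lt_card (h : AgreeWithin δ s t) :
    (1 - δ) * (max s.card t.card : ℕ) < s.card := by
  have hmax : max s.card t.card ≤ s.card + (s ∆ t).card :=
    max_le (Nat.le_add_right _ _) (Finset.card_le_card_add_card_symmDiff s t)
  have : ((max s.card t.card : ℕ) : ℝ) ≤ s.card + (s ∆ t).card := by exact_mod_cast hmax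
  unfold AgreeWithin at h
  linarith

theorem trans (hst : AgreeWithin δ₁ s t) (htu : AgreeWithin δ₂ t u)
    (h₁ : δ₁ ≤ 1 / 3) (h₂ : δ₂ ≤ 1 / 3) : AgreeWithin (3 / 2 * (δ₁ + δ₂)) s u := by
  -- An agreeing pair has sizes within a factor `1 - δ ≥ 2 / 3`, so both maxima on the
  -- right are below `3 / 2` times the maximum for `s, u`.
  have hδ₁ := hst.pos
  have hδ₂ := htu.pos
  have hs := hst.one_sub_mul_lt_card
  have hu := htu.symm.one_sub_mul_lt_card
  have hst' : ((max s.card t.card : ℕ) : ℝ) < 3 / 2 * (max s.card u.card : ℕ) := by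
    have : (s.card : ℝ) ≤ (max s.card u.card : ℕ) := by exact_mod_cast le_max_left _ _
    nlinarith
  have htu' : ((max t.card u.card : ℕ) : ℝ) < 3 / 2 * (max s.card u.card : ℕ) := by
    have : (u.card : ℝ) ≤ (max s.card u.card : ℕ) := by exact_mod_cast le_max_right _ _
    rw [max_comm] at hu
    nlinarith
  have htri : ((s ∆ u).card : ℝ) ≤ (s ∆ t).card + (t ∆ u).card := by
    exact_mod_cast Finset.card_symmDiff_le_add s t u
  unfold AgreeWithin at hst htu ⊢
  nlinarith

theorem inter_nonempty (h : AgreeWithin δ s t) (hδ : δ ≤ 1) : (s ∩ t).Nonempty := by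
  rw [← Finset.not_disjoint_iff_nonempty_inter]
  intro hdisj
  have hsd : (s ∆ t).card = s.card + t.card := by
    have := Finset.two_mul_card_union s t
    have := Finset.card_union_of_disjoint hdisj
    omega
  have hmax : ((max s.card t.card : ℕ) : ℝ) ≤ (s ∆ t).card := by
    rw [hsd]; exact_mod_cast max_le (Nat.le_add_right _ _) (Nat.le_add_left _ _)
  have hpos := h.pos
  unfold AgreeWithin at h
  nlinarith

theorem inter_nonempty_of_subset (h : AgreeWithin δ s t) (hδε : δ + 2 * ε ≤ 1)
    (hs' : s' ⊆ s) (ht' : t' ⊆ t)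
    (hs : (1 - ε) * s.card < s'.card) (ht : (1 - ε) * t.card < t'.card) :
    (s' ∩ t').Nonempty := by
  rw [← Finset.not_disjoint_iff_nonempty_inter]
  intro hdisj
  have hunion : s'.card + t'.card ≤ (s ∪ t).card := by
    rw [← Finset.card_union_of_disjoint hdisj]
    exact Finset.card_le_card (Finset.union_subset_union hs' ht')
  have hcard : 2 * ((s'.card : ℝ) + t'.card) ≤ s.card + t.card + (s ∆ t).card := by
    have := Finset.two_mul_card_union s t
    exact_mod_cast (by omega : 2 * (s'.card + t'.card) ≤ s.card + t.card + (s ∆ t).card)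
  have hmax : ((max s.card t.card : ℕ) : ℝ) ≤ s.card + t.card := by
    exact_mod_cast max_le (Nat.le_add_right _ _) (Nat.le_add_left _ _)
  have hpos := h.pos
  unfold AgreeWithin at h
  -- With `hs`, `ht` and `|s ∆ t| < δ (|s| + |t|)`, `hcard` gives `(1 - δ - 2ε) (|s| + |t|) < 0`.
  nlinarith

end AgreeWithin

end AgreeWithin

section Graph

variable {V : Type*} [Fintype V] [DecidableEq V] {G : SimpleGraph V} [DecidableRel G.Adj]
  {ε δ : ℝ} {a b c u v x y z : V}

theorem InAgreement.symm (h : InAgreement G δ u v) : InAgreement G δ v u :=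
  AgreeWithin.symm h

namespace Heavy

theorem neighborFinset_nonempty (h : Heavy G ε u) : (G.neighborFinset u).Nonempty := by
  rw [Finset.nonempty_iff_ne_empty]
  intro hempty
  simp [Heavy, hempty] at h

theorem inAgreement_self (h : Heavy G ε u) (hδ : 0 < δ) : InAgreement G δ u u :=
  agreeWithin_self h.neighborFinset_nonempty hδ

theorem inAgreement_three_mul (ha : Heavy G ε a) (hb : Heavy G ε b)
    (hab : InAgreement G δ a b) (hδε : δ + 2 * ε ≤ 1) (hε : ε ≤ 1 / 3) :
    InAgreement G (3 * ε) a b := by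
  obtain ⟨w, hw⟩ := AgreeWithin.inter_nonempty_of_subset hab hδε
    (Finset.filter_subset _ _) (Finset.filter_subset _ _) ha hb
  simp only [Finset.mem_inter, Finset.mem_filter] at hw
  exact (AgreeWithin.trans hw.1.2 hw.2.2.symm hε hε).mono (by linarith)

theorem inAgreement_trans (ha : Heavy G ε a) (hc : Heavy G ε c)
    (hab : InAgreement G (3 * ε) a b) (hbc : InAgreement G (3 * ε) b c) (hε : ε ≤ 1 / 11) :
    InAgreement G (3 * ε) a c := by
  have hac : InAgreement G (9 * ε) a c :=
    (AgreeWithin.trans hab hbc (by linarith) (by linarith)).mono (by linarith)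
  exact ha.inAgreement_three_mul hc hac (by linarith) (by linarith)

end Heavy

variable (G ε) in
def HeavyLinked (x y : V) : Prop :=
  ∃ h h', Heavy G ε h ∧ Heavy G ε h' ∧ InAgreement G ε x h ∧ InAgreement G ε y h' ∧
    InAgreement G (3 * ε) h h'

namespace HeavyLinked

theorem symm (hxy : HeavyLinked G ε x y) : HeavyLinked G ε y x := by
  obtain ⟨p, q, hp, hq, hxp, hyq, hpq⟩ := hxy
  exact ⟨q, p, hq, hp, hyq, hxp, hpq.symm⟩

theorem trans (hxy : HeavyLinked G ε x y) (hyz : HeavyLinked G ε y z) (hε : ε ≤ 1 / 11) :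
    HeavyLinked G ε x z := by
  obtain ⟨p, q, hp, -, hxp, hyq, hpq⟩ := hxy
  obtain ⟨q', r, hq', hr, hyq', hzr, hq'r⟩ := hyz
  have hqq' : InAgreement G (3 * ε) q q' :=
    (AgreeWithin.trans hyq.symm hyq' (by linarith) (by linarith)).mono (by linarith)
  exact ⟨p, r, hp, hr, hxp, hzr,
    hp.inAgreement_trans hr (hp.inAgreement_trans hq' hpq hqq' hε) hq'r hε⟩

theorem of_adj (hε : 0 < ε) (hxy : (tildeGraph G ε).Adj x y) : HeavyLinked G ε x y := by
  obtain ⟨-, hag, hx | hy⟩ := hxy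
  · exact ⟨x, x, hx, hx, hx.inAgreement_self hε, hag.symm, hx.inAgreement_self (by positivity)⟩
  · exact ⟨y, y, hy, hy, hag, hy.inAgreement_self hε, hy.inAgreement_self (by positivity)⟩

theorem of_transGen (hε₀ : 0 < ε) (hε : ε ≤ 1 / 11)
    (hxy : Relation.TransGen (tildeGraph G ε).Adj x y) : HeavyLinked G ε x y := by
  induction hxy with
  | single hadj => exact of_adj hε₀ hadj
  | tail _ hadj ih => exact ih.trans (of_adj hε₀ hadj) hε

theorem of_reachable (hε₀ : 0 < ε) (hε : ε ≤ 1 / 11) (hxy : (tildeGraph G ε).Reachable x y)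
    (hne : x ≠ y) : HeavyLinked G ε x y := by
  rw [SimpleGraph.reachable_iff_reflTransGen, Relation.reflTransGen_iff_eq_or_transGen] at hxy
  exact of_transGen hε₀ hε (hxy.resolve_left hne.symm)

theorem inter_neighborFinset_nonempty (hxy : HeavyLinked G ε x y) (hε : ε ≤ 1 / 18) :
    (G.neighborFinset x ∩ G.neighborFinset y).Nonempty := by
  obtain ⟨p, q, -, -, hxp, hyq, hpq⟩ := hxy
  have hxq : AgreeWithin (6 * ε) (G.neighborFinset x) (G.neighborFinset q) :=
    (AgreeWithin.trans hxp hpq (by linarith) (by linarith)).mono (by linarith)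
  exact (hxq.trans hyq.symm (by linarith) (by linarith)).inter_nonempty (by linarith)

end HeavyLinked

theorem IsCluster.linked {C : Finset V} (hC : IsCluster G ε C) (hcard : 1 < C.card)
    (hε₀ : 0 < ε) (hε : ε ≤ 1 / 11) (hu : u ∈ C) (hv : v ∈ C) : HeavyLinked G ε u v := by
  obtain ⟨w, rfl⟩ := hC
  have reach {x : V} (hx : x ∈ Finset.univ.filter ((tildeGraph G ε).Reachable w)) :
      (tildeGraph G ε).Reachable w x :=
    (Finset.mem_filter.mp hx).2
  by_cases huv : u = v
  · obtain ⟨x, hx, hxu⟩ := Finset.exists_mem_ne hcard u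
    have hux := HeavyLinked.of_reachable hε₀ hε ((reach hu).symm.trans (reach hx)) hxu.symm
    subst huv
    exact hux.trans hux.symm hε
  · exact HeavyLinked.of_reachable hε₀ hε ((reach hu).symm.trans (reach hv)) huv

end Graph

/-- Property 11: for every nontrivial cluster `C` of the agreement decomposition
and all `u, v ∈ C`, the neighborhoods intersect: `N(u) ∩ N(v) ≠ ∅`. -/
theorem cluster_nbr_inter_nbr_nonempty :
    ∃ ε₀ : ℝ, 0 < ε₀ ∧
      ∀ (V : Type) (_ : Fintype V) (_ : DecidableEq V)
        (G : SimpleGraph V) (_ : DecidableRel G.Adj) (ε : ℝ), 0 < ε → ε < ε₀ →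
        ∀ C : Finset V, IsCluster G ε C → 1 < C.card →
          ∀ u ∈ C, ∀ v ∈ C,
            (G.neighborFinset u ∩ G.neighborFinset v).Nonempty := by
  refine ⟨1 / 18, by norm_num, fun V _ _ G _ ε hε₀ hε C hC hcard u hu v hv => ?_⟩
  exact (hC.linked hcard hε₀ (by linarith) hu hv).inter_neighborFinset_nonempty hε.le
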